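/- arXiv:2505.01825 — 4 statements merged into one kernel-verified Lean document; each statement's English description precedes it below -/
import Mathlib

section
/- If U, V₁, V₂ are independent random variables each uniformly distributed on [0,1], then Cov(|U - V₁|, |U - V₂|) = 1/180. -/
/-!
Conditionally on `U = u`, the distances `|u - V₁|` and `|u - V₂|` are independent with common
mean `m(u) = ∫₀¹ |u - v| dv = u² - u + 1/2`. Hence `E|U - Vᵢ| = ∫₀¹ m = 1/3` and
`E[|U - V₁| |U - V₂|] = ∫₀¹ m² = 7/60`, and the covariance is `7/60 - 1/9 = 1/180`.
-/

open MeasureTheory ProbabilityTheory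

local notation "𝒰" => volume.restrict (Set.Icc (0 : ℝ) 1)

instance : IsProbabilityMeasure 𝒰 :=
  ⟨by simp⟩

-- `Measure.map` sends a function that is not a.e.-measurable to `0`.
lemma aemeasurable_of_map_eq {α β : Type*} [MeasurableSpace α] [MeasurableSpace β]
    {μ : Measure α} {ν : Measure β} [NeZero ν] {f : α → β} (h : μ.map f = ν) :
    AEMeasurable f μ :=
  aemeasurable_of_map_neZero (h ▸ inferInstance)

lemma integral_uniform_eq_intervalIntegral (f : ℝ → ℝ) :
    ∫ x, f x ∂𝒰 = ∫ x in (0 : ℝ)..1, f x := by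
  rw [integral_Icc_eq_integral_Ioc, intervalIntegral.integral_of_le zero_le_one]

lemma integral_abs_sub_uniform {u : ℝ} (hu : u ∈ Set.Icc (0 : ℝ) 1) :
    ∫ v, |u - v| ∂𝒰 = u ^ 2 - u + 1 / 2 := by
  obtain ⟨hu₀, hu₁⟩ := hu
  have hint (a b : ℝ) : IntervalIntegrable (fun v => |u - v|) volume a b :=
    (by fun_prop : Continuous fun v : ℝ => |u - v|).intervalIntegrable a b
  have below : ∫ v in (0 : ℝ)..u, |u - v| = ∫ v in (0 : ℝ)..u, (u - v) :=
    intervalIntegral.integral_congr fun v hv => by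
      rw [Set.uIcc_of_le hu₀] at hv
      exact abs_of_nonneg (by linarith [hv.2])
  have above : ∫ v in u..(1 : ℝ), |u - v| = ∫ v in u..(1 : ℝ), (v - u) :=
    intervalIntegral.integral_congr fun v hv => by
      rw [Set.uIcc_of_le hu₁] at hv
      rw [abs_sub_comm]
      exact abs_of_nonneg (by linarith [hv.1])
  rw [integral_uniform_eq_intervalIntegral,
    ← intervalIntegral.integral_add_adjacent_intervals (hint 0 u) (hint u 1), below, above,
    intervalIntegral.integral_sub intervalIntegrable_const intervalIntegral.intervalIntegrable_id,
    intervalIntegral.integral_sub intervalIntegral.intervalIntegrable_id intervalIntegrable_const]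
  simp only [integral_id, intervalIntegral.integral_const, smul_eq_mul]
  ring

lemma integral_uniform_sq_sub_add_half :
    ∫ u, (u ^ 2 - u + 1 / 2) ∂𝒰 = 1 / 3 := by
  rw [integral_uniform_eq_intervalIntegral]
  simp (disch := exact (by fun_prop : Continuous _).intervalIntegrable _ _) only
    [intervalIntegral.integral_add, intervalIntegral.integral_sub, integral_pow, integral_id,
      intervalIntegral.integral_const]
  norm_num

lemma integral_uniform_sq_sub_add_half_sq :
    ∫ u, (u ^ 2 - u + 1 / 2) ^ 2 ∂𝒰 = 7 / 60 := by
  have expand (u : ℝ) : (u ^ 2 - u + 1 / 2) ^ 2 = u ^ 4 - 2 * u ^ 3 + 2 * u ^ 2 - u + 1 / 4 := by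
    ring
  rw [integral_uniform_eq_intervalIntegral]
  simp_rw [expand]
  simp (disch := exact (by fun_prop : Continuous _).intervalIntegrable _ _) only
    [intervalIntegral.integral_add, intervalIntegral.integral_sub,
      intervalIntegral.integral_const_mul, integral_pow, integral_id,
      intervalIntegral.integral_const]
  norm_num

lemma integral_prod_prod_mul_eq_integral_sq {α β : Type*} [MeasurableSpace α]
    [MeasurableSpace β] {μ : Measure α} {ν : Measure β} [SFinite μ] [SFinite ν]
    {g : α → β → ℝ}
    (hg : Integrable (fun p : α × β × β => g p.1 p.2.1 * g p.1 p.2.2) (μ.prod (ν.prod ν))) :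
    ∫ p : α × β × β, g p.1 p.2.1 * g p.1 p.2.2 ∂(μ.prod (ν.prod ν)) =
      ∫ a, (∫ b, g a b ∂ν) ^ 2 ∂μ := by
  rw [integral_prod _ hg]
  refine integral_congr_ae (ae_of_all _ fun a => ?_)
  dsimp only
  rw [integral_prod_mul (g a) (g a), sq]

lemma integral_abs_sub_uniform_prod :
    ∫ p : ℝ × ℝ, |p.1 - p.2| ∂((𝒰).prod 𝒰) = 1 / 3 := by
  have hint : Integrable (fun p : ℝ × ℝ => |p.1 - p.2|) ((𝒰).prod 𝒰) := by
    rw [Measure.prod_restrict]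
    exact (by fun_prop : Continuous fun p : ℝ × ℝ => |p.1 - p.2|).continuousOn
      |>.integrableOn_compact (isCompact_Icc.prod isCompact_Icc)
  rw [integral_prod _ hint, setIntegral_congr_fun measurableSet_Icc
    fun u hu => integral_abs_sub_uniform hu, integral_uniform_sq_sub_add_half]

lemma integral_abs_sub_mul_abs_sub_uniform_prod :
    ∫ p : ℝ × ℝ × ℝ, |p.1 - p.2.1| * |p.1 - p.2.2| ∂((𝒰).prod ((𝒰).prod 𝒰)) = 7 / 60 := by
  have hint : Integrable (fun p : ℝ × ℝ × ℝ => |p.1 - p.2.1| * |p.1 - p.2.2|)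
      ((𝒰).prod ((𝒰).prod 𝒰)) := by
    rw [Measure.prod_restrict, Measure.prod_restrict]
    exact (by fun_prop : Continuous fun p : ℝ × ℝ × ℝ => |p.1 - p.2.1| * |p.1 - p.2.2|)
      |>.continuousOn |>.integrableOn_compact
        (isCompact_Icc.prod (isCompact_Icc.prod isCompact_Icc))
  rw [integral_prod_prod_mul_eq_integral_sq (g := fun u v => |u - v|) hint,
    setIntegral_congr_fun measurableSet_Icc fun u hu => by rw [integral_abs_sub_uniform hu],
    integral_uniform_sq_sub_add_half_sq]

section Independence

variable {Ω : Type*} [MeasurableSpace Ω] {μ : Measure Ω} [IsFiniteMeasure μ]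

lemma integral_abs_sub_of_indepFun_uniform {X Y : Ω → ℝ} (h : IndepFun X Y μ)
    (hX : μ.map X = 𝒰) (hY : μ.map Y = 𝒰) :
    ∫ ω, |X ω - Y ω| ∂μ = 1 / 3 := by
  have hX' := aemeasurable_of_map_eq hX
  have hY' := aemeasurable_of_map_eq hY
  have hlaw : μ.map (fun ω => (X ω, Y ω)) = (𝒰).prod 𝒰 := by
    rw [h.map_prod_eq_prod_map_map hX' hY', hX, hY]
  rw [← integral_abs_sub_uniform_prod, ← hlaw,
    integral_map (hX'.prodMk hY') (by fun_prop : Continuous _).aestronglyMeasurable]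

lemma integral_abs_sub_mul_abs_sub_of_iIndepFun_uniform {X Y Z : Ω → ℝ}
    (h : iIndepFun ![X, Y, Z] μ) (hX : μ.map X = 𝒰) (hY : μ.map Y = 𝒰) (hZ : μ.map Z = 𝒰) :
    ∫ ω, |X ω - Y ω| * |X ω - Z ω| ∂μ = 7 / 60 := by
  have hX' := aemeasurable_of_map_eq hX
  have hY' := aemeasurable_of_map_eq hY
  have hZ' := aemeasurable_of_map_eq hZ
  have hmeas : ∀ i, AEMeasurable (![X, Y, Z] i) μ := by
    intro i; fin_cases i <;> assumption
  have hlawYZ : μ.map (fun ω => (Y ω, Z ω)) = (𝒰).prod 𝒰 := by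
    rw [(h.indepFun (i := 1) (j := 2) (by decide)).map_prod_eq_prod_map_map hY' hZ', hY, hZ]
  have hlaw : μ.map (fun ω => (X ω, Y ω, Z ω)) = (𝒰).prod ((𝒰).prod 𝒰) := by
    rw [(h.indepFun_prodMk₀ hmeas 1 2 0 (by decide) (by decide)).symm.map_prod_eq_prod_map_map
      hX' (hY'.prodMk hZ'), hX, hlawYZ]
  rw [← integral_abs_sub_mul_abs_sub_uniform_prod, ← hlaw,
    integral_map (hX'.prodMk (hY'.prodMk hZ')) (by fun_prop : Continuous _).aestronglyMeasurable]

end Independence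

theorem cov_abs_sub_shared_uniform_general
    {Ω : Type*} [MeasureSpace Ω] [IsProbabilityMeasure (ℙ : Measure Ω)]
    (U V₁ V₂ : Ω → ℝ)
    (hInd : iIndepFun ![U, V₁, V₂] ℙ)
    (hUunif : Measure.map U ℙ = volume.restrict (Set.Icc (0:ℝ) 1))
    (hV₁unif : Measure.map V₁ ℙ = volume.restrict (Set.Icc (0:ℝ) 1))
    (hV₂unif : Measure.map V₂ ℙ = volume.restrict (Set.Icc (0:ℝ) 1)) :
    (∫ ω, |U ω - V₁ ω| * |U ω - V₂ ω| ∂ℙ)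
      - (∫ ω, |U ω - V₁ ω| ∂ℙ) * (∫ ω, |U ω - V₂ ω| ∂ℙ) = 1/180 := by
  have hUV₁ : IndepFun U V₁ ℙ := hInd.indepFun (i := 0) (j := 1) (by decide)
  have hUV₂ : IndepFun U V₂ ℙ := hInd.indepFun (i := 0) (j := 2) (by decide)
  rw [integral_abs_sub_mul_abs_sub_of_iIndepFun_uniform hInd hUunif hV₁unif hV₂unif,
    integral_abs_sub_of_indepFun_uniform hUV₁ hUunif hV₁unif,
    integral_abs_sub_of_indepFun_uniform hUV₂ hUunif hV₂unif]
  norm_num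

theorem cov_abs_sub_shared_uniform
    {Ω : Type*} [MeasureSpace Ω] [IsProbabilityMeasure (ℙ : Measure Ω)]
    (U V₁ V₂ : Ω → ℝ) (hU : Measurable U) (hV₁ : Measurable V₁) (hV₂ : Measurable V₂)
    (hInd : iIndepFun ![U, V₁, V₂] ℙ)
    (hUunif : Measure.map U ℙ = volume.restrict (Set.Icc (0:ℝ) 1))
    (hV₁unif : Measure.map V₁ ℙ = volume.restrict (Set.Icc (0:ℝ) 1))
    (hV₂unif : Measure.map V₂ ℙ = volume.restrict (Set.Icc (0:ℝ) 1)) :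
    (∫ ω, |U ω - V₁ ω| * |U ω - V₂ ω| ∂ℙ)
      - (∫ ω, |U ω - V₁ ω| ∂ℙ) * (∫ ω, |U ω - V₂ ω| ∂ℙ) = 1/180 :=
  cov_abs_sub_shared_uniform_general U V₁ V₂ hInd hUunif hV₁unif hV₂unif
end

section
/- If U₁,...,Uₙ,V₁,...,Vₙ are 2n jointly independent uniform [0,1] random variables, then Var( n⁻² ∑_{i=1}^n ∑_{j=1}^n |Uᵢ - Vⱼ| ) = (n+4)/(90 n²). -/
/-!
Write `D_{ij} = |U_i - V_j|`. The variance of the double sum is the sum of the covariances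
`cov(D_{ij}, D_{kl})`, which by independence depend only on how many indices the two pairs
share: `0` if none, `Var |U - V| = 1/6 - 1/9 = 1/18` if both, and
`E|U - V||U - W| - 1/9 = 7/60 - 1/9 = 1/180` if exactly one. Here `E|U - V| = 1/3` and
`E|U - V||U - W| = E g(U)² = 7/60` come from `g(u) = E|u - V| = u² - u + 1/2`. Counting the `n²`
diagonal pairs and the `2n²(n - 1)` pairs sharing one index gives
`n²/18 + n²(n - 1)/90 = n²(n + 4)/90`.
-/

open MeasureTheory ProbabilityTheory Finset Set

local notation "𝒰" => (volume.restrict (Icc (0:ℝ) 1))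

instance inst_s10 : IsProbabilityMeasure 𝒰 := ⟨by simp⟩

lemma sum_sum_ite_eq_diag {ι R : Type*} [Fintype ι] [DecidableEq ι] [Ring R] (a b : R) :
    ∑ i : ι, ∑ j : ι, (if i = j then a else b)
      = Fintype.card ι * a + Fintype.card ι * (Fintype.card ι - 1) * b := by
  have hrow (i : ι) : ∑ j : ι, (if i = j then a else b) = a + (Fintype.card ι - 1) * b := by
    rw [← add_sum_erase _ _ (mem_univ i), if_pos rfl,
      sum_congr rfl fun j hj => if_neg (ne_of_mem_erase hj).symm]
    simp [card_erase_of_mem, Nat.cast_sub (Fintype.card_pos_iff.mpr ⟨i⟩)]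
  simp [hrow, mul_assoc]

lemma integral_unif_eq_intervalIntegral (f : ℝ → ℝ) :
    ∫ x, f x ∂𝒰 = ∫ x in (0:ℝ)..1, f x := by
  rw [intervalIntegral.integral_of_le zero_le_one, integral_Icc_eq_integral_Ioc]

lemma integral_abs_sub_unif {u : ℝ} (hu : u ∈ Icc (0:ℝ) 1) :
    ∫ v, |u - v| ∂𝒰 = u ^ 2 - u + 1 / 2 := by
  have hint (a b : ℝ) : IntervalIntegrable (fun v => |u - v|) volume a b :=
    Continuous.intervalIntegrable (by fun_prop) a b
  rw [integral_unif_eq_intervalIntegral,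
    ← intervalIntegral.integral_add_adjacent_intervals (hint 0 u) (hint u 1)]
  have below : ∫ v in (0:ℝ)..u, |u - v| = ∫ v in (0:ℝ)..u, (u - v) := by
    refine intervalIntegral.integral_congr fun v hv => abs_of_nonneg ?_
    rw [uIcc_of_le hu.1] at hv
    linarith [hv.2]
  have above : ∫ v in u..(1:ℝ), |u - v| = ∫ v in u..(1:ℝ), (v - u) := by
    refine intervalIntegral.integral_congr fun v hv => (abs_of_nonpos ?_).trans (neg_sub u v)
    rw [uIcc_of_le hu.2] at hv
    linarith [hv.1]
  rw [below, above, intervalIntegral.integral_comp_sub_left (fun x => x),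
    intervalIntegral.integral_comp_sub_right (fun x => x)]
  simp only [sub_self, sub_zero, integral_id]
  ring

lemma integral_sq_sub_unif (u : ℝ) : ∫ v, (u - v) ^ 2 ∂𝒰 = u ^ 2 - u + 1 / 3 := by
  simp only [integral_unif_eq_intervalIntegral, sub_zero, integral_pow,
    intervalIntegral.integral_comp_sub_left fun x => x ^ 2]
  ring

lemma integral_integral_abs_sub_unif : ∫ u, ∫ v, |u - v| ∂𝒰 ∂𝒰 = 1 / 3 := by
  rw [setIntegral_congr_fun measurableSet_Icc fun u hu => integral_abs_sub_unif hu,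
    integral_unif_eq_intervalIntegral]
  norm_num [integral_pow]

lemma integral_integral_sq_sub_unif : ∫ u, ∫ v, (u - v) ^ 2 ∂𝒰 ∂𝒰 = 1 / 6 := by
  simp_rw [integral_sq_sub_unif]
  rw [integral_unif_eq_intervalIntegral]
  norm_num [integral_pow]

lemma integral_sq_integral_abs_sub_unif : ∫ u, (∫ v, |u - v| ∂𝒰) ^ 2 ∂𝒰 = 7 / 60 := by
  rw [setIntegral_congr_fun measurableSet_Icc fun u hu => by rw [integral_abs_sub_unif hu],
    integral_unif_eq_intervalIntegral]
  have hexpand (x : ℝ) :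
      (x ^ 2 - x + 1 / 2) ^ 2 = x ^ 4 - 2 * x ^ 3 + 2 * x ^ 2 - x + 1 / 4 := by
    ring
  simp (disch := exact Continuous.intervalIntegrable (by fun_prop) _ _) only [hexpand,
    intervalIntegral.integral_add, intervalIntegral.integral_sub,
    intervalIntegral.integral_const_mul]
  norm_num [integral_pow]

lemma memLp_id_unif (p : ENNReal) : MemLp id p 𝒰 :=
  .of_bound aestronglyMeasurable_id 1 <| ae_restrict_of_forall_mem measurableSet_Icc fun x hx => by
    simpa [abs_le] using ⟨by linarith [hx.1], hx.2⟩

namespace ProbabilityTheory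

variable {Ω : Type*} {mΩ : MeasurableSpace Ω} {P : Measure Ω}

lemma variance_fun_sum_sum [IsFiniteMeasure P] {ι κ : Type*} [Fintype ι] [Fintype κ]
    {A : ι → κ → Ω → ℝ} (hA : ∀ i j, MemLp (A i j) 2 P) :
    Var[fun ω => ∑ i, ∑ j, A i j ω; P] = ∑ i, ∑ k, ∑ j, ∑ l, cov[A i j, A k l; P] := by
  rw [variance_fun_sum (X := fun i ω => ∑ j, A i j ω) fun i => memLp_finsetSum _ fun j _ => hA i j]
  simp_rw [covariance_fun_sum_fun_sum (hA _) (hA _)]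

lemma HasLaw.memLp_of_unif {X : Ω → ℝ} (hX : HasLaw X 𝒰 P) (p : ENNReal) : MemLp X p P := by
  have h := memLp_id_unif p
  rw [← hX.map_eq] at h
  exact (memLp_map_measure_iff aestronglyMeasurable_id hX.aemeasurable).mp h

lemma memLp_abs_sub_of_unif {X Y : Ω → ℝ} (hX : HasLaw X 𝒰 P) (hY : HasLaw Y 𝒰 P) :
    MemLp (fun ω => |X ω - Y ω|) 2 P :=
  ((hX.memLp_of_unif 2).sub (hY.memLp_of_unif 2)).abs

lemma iIndepFun.covariance_abs_sub_abs_sub_eq_zero {ι : Type*} {X : ι → Ω → ℝ}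
    (hX : ∀ a, HasLaw (X a) 𝒰 P) (hind : iIndepFun X P) {a b c d : ι} (hac : a ≠ c)
    (had : a ≠ d) (hbc : b ≠ c) (hbd : b ≠ d) :
    cov[fun ω => |X a ω - X b ω|, fun ω => |X c ω - X d ω|; P] = 0 := by
  have hdist : Measurable fun p : ℝ × ℝ => |p.1 - p.2| := by fun_prop
  exact ((hind.indepFun_prodMk_prodMk₀ (fun i => (hX i).aemeasurable) a b c d hac had hbc hbd).comp
    hdist hdist).covariance_eq_zero
    (memLp_abs_sub_of_unif (hX a) (hX b)) (memLp_abs_sub_of_unif (hX c) (hX d))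

variable [IsProbabilityMeasure P]

lemma IndepFun.integral_comp_eq_integral_integral {𝓧 𝓨 : Type*} [MeasurableSpace 𝓧]
    [MeasurableSpace 𝓨] {X : Ω → 𝓧} {Y : Ω → 𝓨} {μ : Measure 𝓧} {ν : Measure 𝓨} [SFinite μ]
    [SFinite ν] (hXY : X ⟂ᵢ[P] Y) (hX : HasLaw X μ P) (hY : HasLaw Y ν P) {f : 𝓧 × 𝓨 → ℝ}
    (hf : AEStronglyMeasurable f (μ.prod ν)) (hint : Integrable (fun ω => f (X ω, Y ω)) P) :
    ∫ ω, f (X ω, Y ω) ∂P = ∫ x, ∫ y, f (x, y) ∂ν ∂μ := by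
  have hlaw := (indepFun_iff_hasLaw_prodMk_prod hX hY).mp hXY
  have hf_int : Integrable f (μ.prod ν) := by
    rw [← hlaw.map_eq] at hf ⊢
    exact (integrable_map_measure hf hlaw.aemeasurable).mpr hint
  rw [← integral_prod f hf_int]
  exact hlaw.integral_comp hf

section Uniform

variable {X Y Z : Ω → ℝ} (hX : HasLaw X 𝒰 P) (hY : HasLaw Y 𝒰 P)
include hX hY

lemma IndepFun.integral_abs_sub_of_unif (hXY : X ⟂ᵢ[P] Y) : ∫ ω, |X ω - Y ω| ∂P = 1 / 3 :=
  (hXY.integral_comp_eq_integral_integral hX hY (f := fun p => |p.1 - p.2|)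
    (Continuous.aestronglyMeasurable (by fun_prop))
    ((memLp_abs_sub_of_unif hX hY).integrable one_le_two)).trans
    integral_integral_abs_sub_unif

lemma IndepFun.integral_sq_sub_of_unif (hXY : X ⟂ᵢ[P] Y) : ∫ ω, (X ω - Y ω) ^ 2 ∂P = 1 / 6 :=
  (hXY.integral_comp_eq_integral_integral hX hY (f := fun p => (p.1 - p.2) ^ 2)
    (Continuous.aestronglyMeasurable (by fun_prop))
    ((hX.memLp_of_unif 2).sub (hY.memLp_of_unif 2)).integrable_sq).trans
    integral_integral_sq_sub_unif

lemma IndepFun.integral_abs_sub_mul_abs_sub_of_unif (hZ : HasLaw Z 𝒰 P)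
    (hXYZ : X ⟂ᵢ[P] fun ω => (Y ω, Z ω)) (hYZ : Y ⟂ᵢ[P] Z) :
    ∫ ω, |X ω - Y ω| * |X ω - Z ω| ∂P = 7 / 60 := by
  rw [hXYZ.integral_comp_eq_integral_integral hX ((indepFun_iff_hasLaw_prodMk_prod hY hZ).mp hYZ)
    (f := fun p => |p.1 - p.2.1| * |p.1 - p.2.2|) (Continuous.aestronglyMeasurable (by fun_prop))
    ((memLp_abs_sub_of_unif hX hY).integrable_mul (memLp_abs_sub_of_unif hX hZ))]
  have hinner (u : ℝ) :
      ∫ q, |u - q.1| * |u - q.2| ∂(Measure.prod 𝒰 𝒰) = (∫ v, |u - v| ∂𝒰) ^ 2 := by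
    rw [integral_prod_mul (fun v => |u - v|) (fun v => |u - v|), sq]
  simp_rw [hinner]
  exact integral_sq_integral_abs_sub_unif

end Uniform

section Family

variable {ι : Type*} {X : ι → Ω → ℝ} (hX : ∀ a, HasLaw (X a) 𝒰 P) (hind : iIndepFun X P)
include hX hind

lemma iIndepFun.covariance_abs_sub_self_of_unif {a b : ι} (hab : a ≠ b) :
    cov[fun ω => |X a ω - X b ω|, fun ω => |X a ω - X b ω|; P] = 1 / 18 := by
  rw [covariance_eq_sub (memLp_abs_sub_of_unif (hX a) (hX b)) (memLp_abs_sub_of_unif (hX a) (hX b))]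
  simp only [Pi.mul_apply, ← sq, sq_abs]
  rw [(hind.indepFun hab).integral_sq_sub_of_unif (hX a) (hX b),
    (hind.indepFun hab).integral_abs_sub_of_unif (hX a) (hX b)]
  norm_num

lemma iIndepFun.covariance_abs_sub_abs_sub_of_unif {a b c : ι} (hab : a ≠ b) (hac : a ≠ c)
    (hbc : b ≠ c) : cov[fun ω => |X a ω - X b ω|, fun ω => |X a ω - X c ω|; P] = 1 / 180 := by
  rw [covariance_eq_sub (memLp_abs_sub_of_unif (hX a) (hX b)) (memLp_abs_sub_of_unif (hX a) (hX c))]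
  have hXYZ := (hind.indepFun_prodMk₀ (fun i => (hX i).aemeasurable) b c a hab.symm hac.symm).symm
  simp only [Pi.mul_apply]
  rw [hXYZ.integral_abs_sub_mul_abs_sub_of_unif (hX a) (hX b) (hX c) (hind.indepFun hbc),
    (hind.indepFun hab).integral_abs_sub_of_unif (hX a) (hX b),
    (hind.indepFun hac).integral_abs_sub_of_unif (hX a) (hX c)]
  norm_num

end Family

lemma iIndepFun.covariance_abs_sub_abs_sub_sumElim {ι κ : Type*} [DecidableEq ι] [DecidableEq κ]
    {U : ι → Ω → ℝ} {V : κ → Ω → ℝ} (hU : ∀ i, HasLaw (U i) 𝒰 P) (hV : ∀ j, HasLaw (V j) 𝒰 P)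
    (hind : iIndepFun (Sum.elim U V) P) (i k : ι) (j l : κ) :
    cov[fun ω => |U i ω - V j ω|, fun ω => |U k ω - V l ω|; P]
      = if i = k then (if j = l then 1 / 18 else 1 / 180) else (if j = l then 1 / 180 else 0) := by
  have hX : ∀ a, HasLaw (Sum.elim U V a) 𝒰 P := by
    rintro (i | j)
    exacts [hU i, hV j]
  split_ifs with hik hjl hjl
  · subst hik hjl
    exact hind.covariance_abs_sub_self_of_unif hX (a := .inl i) (b := .inr j) (by simp)
  · subst hik
    exact hind.covariance_abs_sub_abs_sub_of_unif hX (a := .inl i) (b := .inr j) (c := .inr l)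
      (by simp) (by simp) (by simpa)
  · subst hjl
    simp_rw [abs_sub_comm (U _ _)]
    exact hind.covariance_abs_sub_abs_sub_of_unif hX (a := .inr j) (b := .inl i) (c := .inl k)
      (by simp) (by simp) (by simpa)
  · exact hind.covariance_abs_sub_abs_sub_eq_zero hX (a := .inl i) (b := .inr j) (c := .inl k)
      (d := .inr l) (by simpa) (by simp) (by simp) (by simpa)

end ProbabilityTheory

theorem variance_double_sum_abs_general
    {Ω : Type*} [MeasureSpace Ω] [IsProbabilityMeasure (ℙ : Measure Ω)]
    (n : ℕ) (U V : Fin n → Ω → ℝ)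
    (hInd : iIndepFun (Sum.elim U V) ℙ)
    (hUunif : ∀ i, Measure.map (U i) ℙ = volume.restrict (Set.Icc (0:ℝ) 1))
    (hVunif : ∀ i, Measure.map (V i) ℙ = volume.restrict (Set.Icc (0:ℝ) 1)) :
    variance (fun ω => (1 / (n:ℝ)^2) * ∑ i : Fin n, ∑ j : Fin n, |U i ω - V j ω|) ℙ
      = ((n:ℝ) + 4) / (90 * (n:ℝ)^2) := by
  have hU (i : Fin n) : HasLaw (U i) 𝒰 ℙ := ⟨.of_map_ne_zero (by simp [hUunif i]), hUunif i⟩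
  have hV (j : Fin n) : HasLaw (V j) 𝒰 ℙ := ⟨.of_map_ne_zero (by simp [hVunif j]), hVunif j⟩
  rw [variance_const_mul, variance_fun_sum_sum fun i j => memLp_abs_sub_of_unif (hU i) (hV j)]
  simp only [hInd.covariance_abs_sub_abs_sub_sumElim hU hV, sum_ite_irrel, sum_sum_ite_eq_diag,
    Fintype.card_fin]
  rcases eq_or_ne (n : ℝ) 0 with hn | hn
  · simp [hn]
  · field_simp
    ring

theorem variance_double_sum_abs
    {Ω : Type*} [MeasureSpace Ω] [IsProbabilityMeasure (ℙ : Measure Ω)]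
    (n : ℕ) (hn : 1 ≤ n) (U V : Fin n → Ω → ℝ)
    (hU : ∀ i, Measurable (U i)) (hV : ∀ i, Measurable (V i))
    (hInd : iIndepFun (Sum.elim U V) ℙ)
    (hUunif : ∀ i, Measure.map (U i) ℙ = volume.restrict (Set.Icc (0:ℝ) 1))
    (hVunif : ∀ i, Measure.map (V i) ℙ = volume.restrict (Set.Icc (0:ℝ) 1)) :
    variance (fun ω => (1 / (n:ℝ)^2) * ∑ i : Fin n, ∑ j : Fin n, |U i ω - V j ω|) ℙ
      = ((n:ℝ) + 4) / (90 * (n:ℝ)^2) :=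
  variance_double_sum_abs_general n U V hInd hUunif hVunif
end

section
/- If U and V are independent uniform [0,1] random variables, then Var( 2/3 - |U - V| - U(1-U) - V(1-V) ) = 2/45. -/
/-!
By independence the law of `(U, V)` is the uniform measure on the unit square, so the variance
is a double integral over `[0,1]²`. The summand is degenerate: for each fixed `x` its integral in
`y` vanishes, so it is centred and its variance is its second moment. Splitting the inner
integrals at `y = x` removes the absolute value and leaves polynomial integrals; the inner
second moment is `4/45 - 4/3 x² + 8/3 x³ - 4/3 x⁴`, whose integral over `[0,1]` is `2/45`.
-/

open MeasureTheory ProbabilityTheory Set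

lemma ProbabilityTheory.IndepFun.measurePreserving_prodMk {Ω α β : Type*} [MeasurableSpace Ω]
    [MeasurableSpace α] [MeasurableSpace β] {μ : Measure Ω} [IsFiniteMeasure μ]
    {U : Ω → α} {V : Ω → β} (hUV : IndepFun U V μ) (hU : Measurable U) (hV : Measurable V) :
    MeasurePreserving (fun ω => (U ω, V ω)) μ ((μ.map U).prod (μ.map V)) :=
  ⟨hU.prodMk hV, (indepFun_iff_map_prod_eq_prod_map_map hU.aemeasurable hV.aemeasurable).1 hUV⟩

lemma Continuous.integrable_prod_restrict {E : Type*} [NormedAddCommGroup E] {f : ℝ × ℝ → E}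
    (hf : Continuous f) {s t : Set ℝ} (hs : IsCompact s) (ht : IsCompact t) :
    Integrable f ((volume.restrict s).prod (volume.restrict t)) := by
  rw [Measure.prod_restrict, ← Measure.volume_eq_prod]
  exact hf.continuousOn.integrableOn_compact (hs.prod ht)

lemma integral_prod_restrict_Icc {f : ℝ × ℝ → ℝ} (hf : Continuous f) {a b c d : ℝ}
    (hab : a ≤ b) (hcd : c ≤ d) :
    ∫ p, f p ∂((volume.restrict (Icc a b)).prod (volume.restrict (Icc c d)))
      = ∫ x in a..b, ∫ y in c..d, f (x, y) := by
  rw [integral_prod _ (hf.integrable_prod_restrict isCompact_Icc isCompact_Icc),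
    intervalIntegral.integral_of_le hab, ← integral_Icc_eq_integral_Ioc]
  simp_rw [intervalIntegral.integral_of_le hcd, integral_Icc_eq_integral_Ioc]

/-- Minus the degenerate Hoeffding component of the kernel `|x - y|`: for `U`, `V` uniform,
`E |U - V| = 1/3` and `E [|U - V| | U = x] = 1/2 - x (1 - x)`. -/
noncomputable def hajekSummand (x y : ℝ) : ℝ := 2/3 - |x - y| - x * (1 - x) - y * (1 - y)

lemma intervalIntegral_comp_abs_sub {g : ℝ → ℝ → ℝ} (hg : Continuous (Function.uncurry g))
    {a b x : ℝ} (hx : x ∈ Icc a b) :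
    ∫ y in a..b, g |x - y| y = (∫ y in a..x, g (x - y) y) + ∫ y in x..b, g (y - x) y := by
  have hint : Continuous fun y => g |x - y| y :=
    hg.comp (by fun_prop : Continuous fun y => (|x - y|, y))
  rw [← intervalIntegral.integral_add_adjacent_intervals (hint.intervalIntegrable a x)
    (hint.intervalIntegrable x b)]
  congr 1
  · refine intervalIntegral.integral_congr fun y hy => ?_
    rw [uIcc_of_le hx.1] at hy
    simp only [abs_of_nonneg (sub_nonneg.2 hy.2)]
  · refine intervalIntegral.integral_congr fun y hy => ?_
    rw [uIcc_of_le hx.2] at hy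
    simp only [abs_sub_comm x y, abs_of_nonneg (sub_nonneg.2 hy.1)]

lemma intervalIntegral_hajekSummand {x : ℝ} (hx : x ∈ Icc 0 1) :
    ∫ y in (0:ℝ)..1, hajekSummand x y = 0 := by
  simp only [hajekSummand, intervalIntegral_comp_abs_sub
    (g := fun t y => 2/3 - t - x * (1 - x) - y * (1 - y)) (by fun_prop) hx]
  ring_nf
  simp (disch := exact Continuous.intervalIntegrable (by fun_prop) _ _) only
    [intervalIntegral.integral_add, intervalIntegral.integral_sub,
    intervalIntegral.integral_mul_const, intervalIntegral.integral_const_mul (𝕜 := ℝ),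
    intervalIntegral.integral_const, integral_pow,
    integral_id, smul_eq_mul]
  ring

lemma intervalIntegral_hajekSummand_sq {x : ℝ} (hx : x ∈ Icc 0 1) :
    ∫ y in (0:ℝ)..1, hajekSummand x y ^ 2 = 4/45 - 4/3 * x^2 + 8/3 * x^3 - 4/3 * x^4 := by
  simp only [hajekSummand, intervalIntegral_comp_abs_sub
    (g := fun t y => (2/3 - t - x * (1 - x) - y * (1 - y)) ^ 2) (by fun_prop) hx]
  ring_nf
  simp (disch := exact Continuous.intervalIntegrable (by fun_prop) _ _) only
    [intervalIntegral.integral_add, intervalIntegral.integral_sub,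
    intervalIntegral.integral_mul_const, intervalIntegral.integral_const_mul (𝕜 := ℝ),
    intervalIntegral.integral_const, integral_pow,
    integral_id, smul_eq_mul]
  ring

theorem variance_hajek_summand
    {Ω : Type*} [MeasureSpace Ω] [IsProbabilityMeasure (ℙ : Measure Ω)]
    (U V : Ω → ℝ) (hU : Measurable U) (hV : Measurable V)
    (hInd : IndepFun U V ℙ)
    (hUunif : Measure.map U ℙ = volume.restrict (Set.Icc (0:ℝ) 1))
    (hVunif : Measure.map V ℙ = volume.restrict (Set.Icc (0:ℝ) 1)) :
    variance (fun ω => 2/3 - |U ω - V ω| - U ω * (1 - U ω) - V ω * (1 - V ω)) ℙ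
      = 2/45 := by
  set ν := (volume.restrict (Icc (0:ℝ) 1)).prod (volume.restrict (Icc (0:ℝ) 1))
  have hlaw : MeasurePreserving (fun ω => (U ω, V ω)) ℙ ν := by
    simpa only [hUunif, hVunif] using hInd.measurePreserving_prodMk hU hV
  have hcont : Continuous (Function.uncurry hajekSummand) := by
    unfold hajekSummand; fun_prop
  have h01 : (0:ℝ) ≤ 1 := zero_le_one
  have hmean : ∫ p, Function.uncurry hajekSummand p ∂ν = 0 := by
    rw [integral_prod_restrict_Icc hcont h01 h01]
    simp [intervalIntegral.integral_congr fun x hx =>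
      intervalIntegral_hajekSummand (uIcc_of_le h01 ▸ hx)]
  calc variance (fun ω => Function.uncurry hajekSummand (U ω, V ω)) ℙ
      = variance (Function.uncurry hajekSummand) ν := hlaw.variance_fun_comp hcont.aemeasurable
    _ = ∫ p, Function.uncurry hajekSummand p ^ 2 ∂ν :=
      variance_of_integral_eq_zero hcont.aemeasurable hmean
    _ = ∫ x in (0:ℝ)..1, (4/45 - 4/3 * x^2 + 8/3 * x^3 - 4/3 * x^4) := by
      rw [integral_prod_restrict_Icc (f := fun p => Function.uncurry hajekSummand p ^ 2)
        (by fun_prop) h01 h01]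
      exact intervalIntegral.integral_congr fun x hx =>
        intervalIntegral_hajekSummand_sq (uIcc_of_le h01 ▸ hx)
    _ = 2/45 := by
      simp (disch := exact Continuous.intervalIntegrable (by fun_prop) _ _) only
        [intervalIntegral.integral_add, intervalIntegral.integral_sub,
        intervalIntegral.integral_const_mul (𝕜 := ℝ), intervalIntegral.integral_const,
        integral_pow, smul_eq_mul]
      norm_num
end

section
/- For a uniformly random permutation σ of {1,...,n}, Spearman's footrule φₙ = 1 - (3/(n²-1)) ∑_{i=1}^n |i - σ(i)| has variance (2n² + 7)/(5(n+1)(n-1)²). -/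
open Finset

noncomputable def dd {N : ℕ} (i j : Fin N) : ℝ := |((i:ℕ):ℝ) - ((j:ℕ):ℝ)|

lemma dd_symm {N : ℕ} (i j : Fin N) : dd i j = dd j i := abs_sub_comm _ _

lemma sum_poly4 (n : ℕ) (a b c d e : ℝ) :
    ∑ i ∈ Finset.range n, (a*(i:ℝ)^4 + b*(i:ℝ)^3 + c*(i:ℝ)^2 + d*(i:ℝ) + e)
      = a*((n:ℝ)*((n:ℝ)-1)*(2*(n:ℝ)-1)*(3*(n:ℝ)^2-3*(n:ℝ)-1)/30)
        + b*((n:ℝ)^2*((n:ℝ)-1)^2/4)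
        + c*((n:ℝ)*((n:ℝ)-1)*(2*(n:ℝ)-1)/6) + d*((n:ℝ)*((n:ℝ)-1)/2) + e*(n:ℝ) := by
  induction n with
  | zero => simp
  | succ n ih => rw [Finset.sum_range_succ, ih]; push_cast; ring

lemma fsum : ∀ (n i : ℕ), i < n →
    ∑ j ∈ Finset.range n, |(i:ℝ) - (j:ℝ)| = (i:ℝ)^2 - ((n:ℝ)-1)*(i:ℝ) + (n:ℝ)*((n:ℝ)-1)/2 := by
  intro n
  induction n with
  | zero => intro i h; exact absurd h (Nat.not_lt_zero i)
  | succ n ih =>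
    intro i hi
    rw [Finset.sum_range_succ]
    rcases Nat.lt_succ_iff_lt_or_eq.mp hi with h | h
    · rw [ih i h, abs_of_nonpos (by
        have : (i:ℝ) ≤ (n:ℝ) := by exact_mod_cast h.le
        linarith)]
      push_cast; ring
    · subst h
      have h1 : ∀ j ∈ Finset.range i, |(i:ℝ) - (j:ℝ)|
          = 0*(j:ℝ)^4+0*(j:ℝ)^3+0*(j:ℝ)^2+(-1)*(j:ℝ)+(i:ℝ) := by
        intro j hj
        have hj' : (j:ℝ) ≤ (i:ℝ) := by exact_mod_cast (Finset.mem_range.mp hj).le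
        rw [abs_of_nonneg (by linarith)]; ring
      rw [Finset.sum_congr rfl h1, sum_poly4]
      simp; ring

lemma hFi (m : ℕ) (i : Fin (m+2)) :
    ∑ j : Fin (m+2), dd i j
      = ((i:ℕ):ℝ)^2 - ((m:ℝ)+1)*((i:ℕ):ℝ) + ((m:ℝ)+2)*((m:ℝ)+1)/2 := by
  have h := fsum (m+2) (i:ℕ) i.isLt
  rw [← Fin.sum_univ_eq_sum_range (fun j => |((i:ℕ):ℝ) - (j:ℝ)|) (m+2)] at h
  push_cast at h
  simp only [dd]
  rw [h]; ring

lemma hAv (m : ℕ) :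
    ∑ i : Fin (m+2), ∑ j : Fin (m+2), dd i j = ((m:ℝ)+2)*(((m:ℝ)+2)^2-1)/3 := by
  rw [Finset.sum_congr rfl (fun i _ => hFi m i),
    Fin.sum_univ_eq_sum_range (fun i => ((i:ℕ):ℝ)^2 - ((m:ℝ)+1)*((i:ℕ):ℝ) + ((m:ℝ)+2)*((m:ℝ)+1)/2) (m+2)]
  have h1 : ∀ i ∈ Finset.range (m+2),
      (i:ℝ)^2 - ((m:ℝ)+1)*(i:ℝ) + ((m:ℝ)+2)*((m:ℝ)+1)/2
        = 0*(i:ℝ)^4+0*(i:ℝ)^3+1*(i:ℝ)^2+(-((m:ℝ)+1))*(i:ℝ)+(((m:ℝ)+2)*((m:ℝ)+1)/2) := by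
    intro i _; ring
  rw [Finset.sum_congr rfl h1, sum_poly4]
  push_cast; ring

lemma hBv (m : ℕ) :
    ∑ i : Fin (m+2), (∑ j : Fin (m+2), dd i j) * (∑ j : Fin (m+2), dd i j)
      = (7*((m:ℝ)+2)^5 - 15*((m:ℝ)+2)^3 + 8*((m:ℝ)+2))/60 := by
  rw [Finset.sum_congr rfl (fun i _ => by rw [hFi m i]),
    Fin.sum_univ_eq_sum_range (fun i => (((i:ℕ):ℝ)^2 - ((m:ℝ)+1)*((i:ℕ):ℝ) + ((m:ℝ)+2)*((m:ℝ)+1)/2)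
      * (((i:ℕ):ℝ)^2 - ((m:ℝ)+1)*((i:ℕ):ℝ) + ((m:ℝ)+2)*((m:ℝ)+1)/2)) (m+2)]
  have h1 : ∀ i ∈ Finset.range (m+2),
      ((i:ℝ)^2 - ((m:ℝ)+1)*(i:ℝ) + ((m:ℝ)+2)*((m:ℝ)+1)/2)
        * ((i:ℝ)^2 - ((m:ℝ)+1)*(i:ℝ) + ((m:ℝ)+2)*((m:ℝ)+1)/2)
      = 1*(i:ℝ)^4+(-2*((m:ℝ)+1))*(i:ℝ)^3+(((m:ℝ)+1)^2+((m:ℝ)+2)*((m:ℝ)+1))*(i:ℝ)^2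
        +(-(((m:ℝ)+1)^2*((m:ℝ)+2)))*(i:ℝ)+(((m:ℝ)+2)*((m:ℝ)+1)/2)^2 := by
    intro i _; ring
  rw [Finset.sum_congr rfl h1, sum_poly4]
  push_cast; ring

lemma hCv (m : ℕ) :
    ∑ i : Fin (m+2), ∑ j : Fin (m+2), dd i j * dd i j
      = ((m:ℝ)+2)^2*(((m:ℝ)+2)^2-1)/6 := by
  have inner : ∀ i : Fin (m+2), ∑ j : Fin (m+2), dd i j * dd i j
      = ((m:ℝ)+2)*((i:ℕ):ℝ)^2 - ((m:ℝ)+2)*((m:ℝ)+1)*((i:ℕ):ℝ)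
        + ((m:ℝ)+2)*((m:ℝ)+1)*(2*((m:ℝ)+2)-1)/6 := by
    intro i
    have e1 : ∀ j : Fin (m+2), dd i j * dd i j
        = 0*((j:ℕ):ℝ)^4+0*((j:ℕ):ℝ)^3+1*((j:ℕ):ℝ)^2
          +(-2*((i:ℕ):ℝ))*((j:ℕ):ℝ)+((i:ℕ):ℝ)^2 := by
      intro j
      rw [dd, abs_mul_abs_self]; ring
    rw [Finset.sum_congr rfl (fun j _ => e1 j),
      Fin.sum_univ_eq_sum_range (fun j => 0*(j:ℝ)^4+0*(j:ℝ)^3+1*(j:ℝ)^2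
        +(-2*((i:ℕ):ℝ))*(j:ℝ)+((i:ℕ):ℝ)^2) (m+2), sum_poly4]
    push_cast; ring
  rw [Finset.sum_congr rfl (fun i _ => inner i),
    Fin.sum_univ_eq_sum_range (fun i => ((m:ℝ)+2)*((i:ℕ):ℝ)^2 - ((m:ℝ)+2)*((m:ℝ)+1)*((i:ℕ):ℝ)
      + ((m:ℝ)+2)*((m:ℝ)+1)*(2*((m:ℝ)+2)-1)/6) (m+2)]
  have h1 : ∀ i ∈ Finset.range (m+2),
      ((m:ℝ)+2)*(i:ℝ)^2 - ((m:ℝ)+2)*((m:ℝ)+1)*(i:ℝ) + ((m:ℝ)+2)*((m:ℝ)+1)*(2*((m:ℝ)+2)-1)/6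
      = 0*(i:ℝ)^4+0*(i:ℝ)^3+((m:ℝ)+2)*(i:ℝ)^2+(-(((m:ℝ)+2)*((m:ℝ)+1)))*(i:ℝ)
        +(((m:ℝ)+2)*((m:ℝ)+1)*(2*((m:ℝ)+2)-1)/6) := by
    intro i _; ring
  rw [Finset.sum_congr rfl h1, sum_poly4]
  push_cast; ring

lemma key1 (m : ℕ) (G : Fin (m+1) → ℝ) (i : Fin (m+1)) :
    ∑ σ : Equiv.Perm (Fin (m+1)), G (σ i) = (Nat.factorial m : ℝ) * ∑ j, G j := by
  have h0 : ∑ σ : Equiv.Perm (Fin (m+1)), G (σ i)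
      = ∑ σ : Equiv.Perm (Fin (m+1)), G (σ 0) := by
    refine Fintype.sum_equiv (Equiv.mulRight (Equiv.swap 0 i)) _ _ (fun σ => ?_)
    simp [Equiv.Perm.mul_apply]
  rw [h0, ← Equiv.sum_comp Equiv.Perm.decomposeFin.symm (fun σ => G (σ 0)),
    Fintype.sum_prod_type]
  simp only [Equiv.Perm.decomposeFin_symm_apply_zero, Finset.sum_const, Finset.card_univ,
    Fintype.card_perm, Fintype.card_fin, nsmul_eq_mul, ← Finset.sum_mul]
  rw [← Finset.mul_sum]

lemma key2 (m : ℕ) (H : Fin (m+2) → Fin (m+2) → ℝ) (i k : Fin (m+2)) (hik : i ≠ k) :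
    ∑ σ : Equiv.Perm (Fin (m+2)), H (σ i) (σ k)
      = (Nat.factorial m : ℝ) * ∑ j, ((∑ l, H j l) - H j j) := by
  obtain ⟨π, hπ0, hπ1⟩ : ∃ π : Equiv.Perm (Fin (m+2)), π 0 = i ∧ π 1 = k := by
    have h10 : (1 : Fin (m+2)) ≠ 0 := by
      simp [Fin.ext_iff]
    have hp : Equiv.swap (0:Fin (m+2)) i 1 ≠ i := by
      rcases eq_or_ne i 1 with h | h
      · subst h; rw [Equiv.swap_apply_right]; exact h10.symm
      · rw [Equiv.swap_apply_of_ne_of_ne h10 h.symm]; exact h.symm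
    refine ⟨(Equiv.swap (Equiv.swap 0 i 1) k) * (Equiv.swap 0 i), ?_, ?_⟩
    · rw [Equiv.Perm.mul_apply, Equiv.swap_apply_left,
        Equiv.swap_apply_of_ne_of_ne hp.symm hik]
    · rw [Equiv.Perm.mul_apply, Equiv.swap_apply_left]
  have h01 : ∑ σ : Equiv.Perm (Fin (m+2)), H (σ i) (σ k)
      = ∑ σ : Equiv.Perm (Fin (m+2)), H (σ 0) (σ 1) := by
    refine Fintype.sum_equiv (Equiv.mulRight π) _ _ (fun σ => ?_)
    simp [Equiv.Perm.mul_apply, hπ0, hπ1]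
  rw [h01, ← Equiv.sum_comp Equiv.Perm.decomposeFin.symm (fun σ => H (σ 0) (σ 1)),
    Fintype.sum_prod_type]
  simp only [Equiv.Perm.decomposeFin_symm_apply_zero, Equiv.Perm.decomposeFin_symm_apply_one]
  have step : ∀ p : Fin (m+2),
      ∑ e : Equiv.Perm (Fin (m+1)), H p (Equiv.swap 0 p ((e 0).succ))
        = (Nat.factorial m : ℝ) * ((∑ l, H p l) - H p p) := by
    intro p
    rw [key1 m (fun l => H p (Equiv.swap 0 p l.succ)) 0]
    congr 1
    have h1 := Fin.sum_univ_succ (f := fun w : Fin (m+2) => H p (Equiv.swap 0 p w))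
    have h2 := Equiv.sum_comp (Equiv.swap (0:Fin (m+2)) p) (fun w => H p w)
    rw [Equiv.swap_apply_left] at h1
    linarith
  rw [Finset.sum_congr rfl (fun p _ => step p), ← Finset.mul_sum]

lemma key1p (m : ℕ) (f g : Fin (m+2) → ℝ) (i : Fin (m+2)) :
    ∑ σ : Equiv.Perm (Fin (m+2)), f (σ i) * g (σ i)
      = (Nat.factorial (m+1) : ℝ) * ∑ j, f j * g j :=
  key1 (m+1) (fun j => f j * g j) i

lemma key1s (m : ℕ) (f : Fin (m+2) → ℝ) (i : Fin (m+2)) :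
    ∑ σ : Equiv.Perm (Fin (m+2)), f (σ i) = (Nat.factorial (m+1) : ℝ) * ∑ j, f j :=
  key1 (m+1) f i

lemma key2' (m : ℕ) (f g : Fin (m+2) → ℝ) (i k : Fin (m+2)) (hik : i ≠ k) :
    ∑ σ : Equiv.Perm (Fin (m+2)), f (σ i) * g (σ k)
      = (Nat.factorial m : ℝ) * ((∑ j, f j) * (∑ l, g l) - ∑ j, f j * g j) := by
  have h : ∑ σ : Equiv.Perm (Fin (m+2)), f (σ i) * g (σ k)
      = (Nat.factorial m : ℝ) * ∑ j, ((∑ l, f j * g l) - f j * g j) :=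
    key2 m (fun j l => f j * g l) i k hik
  rw [h]
  congr 1
  rw [Finset.sum_sub_distrib, ← Finset.sum_mul_sum]

lemma hcross (m : ℕ) (i : Fin (m+2)) :
    ∑ k : Fin (m+2), ∑ j : Fin (m+2), dd i j * dd k j
      = ∑ j : Fin (m+2), dd i j * (∑ l : Fin (m+2), dd j l) := by
  rw [Finset.sum_comm]
  refine Finset.sum_congr rfl fun j _ => ?_
  rw [← Finset.mul_sum]
  congr 1
  exact Finset.sum_congr rfl fun k _ => dd_symm k j

lemma hW (m : ℕ) :
    ∑ i : Fin (m+2), ∑ j : Fin (m+2), dd i j * (∑ l : Fin (m+2), dd j l)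
      = ∑ j : Fin (m+2), (∑ l : Fin (m+2), dd j l) * (∑ l : Fin (m+2), dd j l) := by
  rw [Finset.sum_comm]
  refine Finset.sum_congr rfl fun j _ => ?_
  rw [← Finset.sum_mul]
  congr 1
  exact Finset.sum_congr rfl fun i _ => dd_symm i j

lemma hT (m : ℕ) :
    ∑ σ : Equiv.Perm (Fin (m+2)), (∑ i : Fin (m+2), dd i (σ i))
      = (Nat.factorial (m+1) : ℝ) * (((m:ℝ)+2)*(((m:ℝ)+2)^2-1)/3) := by
  rw [Finset.sum_comm]
  rw [Finset.sum_congr rfl (fun i _ => key1s m (dd i) i), ← Finset.mul_sum, hAv m]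

lemma hU (m : ℕ) :
    ∑ σ : Equiv.Perm (Fin (m+2)), (∑ i : Fin (m+2), dd i (σ i))^2
      = (Nat.factorial (m+1) : ℝ) * (((m:ℝ)+2)^2*(((m:ℝ)+2)^2-1)/6)
        + (Nat.factorial m : ℝ) *
          ((((m:ℝ)+2)*(((m:ℝ)+2)^2-1)/3) * (((m:ℝ)+2)*(((m:ℝ)+2)^2-1)/3)
            - 2*((7*((m:ℝ)+2)^5 - 15*((m:ℝ)+2)^3 + 8*((m:ℝ)+2))/60)
            + ((m:ℝ)+2)^2*(((m:ℝ)+2)^2-1)/6) := by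
  have part2 : ∑ i : Fin (m+2), ∑ k ∈ Finset.univ.erase i,
      (∑ σ : Equiv.Perm (Fin (m+2)), dd i (σ i) * dd k (σ k))
      = (Nat.factorial m : ℝ) *
          ((((m:ℝ)+2)*(((m:ℝ)+2)^2-1)/3) * (((m:ℝ)+2)*(((m:ℝ)+2)^2-1)/3)
            - 2*((7*((m:ℝ)+2)^5 - 15*((m:ℝ)+2)^3 + 8*((m:ℝ)+2))/60)
            + ((m:ℝ)+2)^2*(((m:ℝ)+2)^2-1)/6) := by
    have e3 : ∀ i : Fin (m+2), ∑ k ∈ Finset.univ.erase i,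
        (∑ σ : Equiv.Perm (Fin (m+2)), dd i (σ i) * dd k (σ k))
        = (Nat.factorial m : ℝ) *
            ((∑ j : Fin (m+2), dd i j) * (∑ l : Fin (m+2), ∑ r : Fin (m+2), dd l r)
              - (∑ j : Fin (m+2), dd i j * (∑ l : Fin (m+2), dd j l))
              - ((∑ j : Fin (m+2), dd i j) * (∑ l : Fin (m+2), dd i l)
                  - ∑ j : Fin (m+2), dd i j * dd i j)) := by
      intro i
      rw [Finset.sum_congr rfl (fun k hk =>
        key2' m (dd i) (dd k) i k (fun h => (Finset.ne_of_mem_erase hk) h.symm)),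
        Finset.sum_erase_eq_sub (Finset.mem_univ i)]
      have e4 : ∑ k : Fin (m+2),
          (Nat.factorial m : ℝ) * ((∑ j : Fin (m+2), dd i j) * (∑ l : Fin (m+2), dd k l)
            - ∑ j : Fin (m+2), dd i j * dd k j)
          = (Nat.factorial m : ℝ) *
              ((∑ j : Fin (m+2), dd i j) * (∑ l : Fin (m+2), ∑ r : Fin (m+2), dd l r)
                - (∑ j : Fin (m+2), dd i j * (∑ l : Fin (m+2), dd j l))) := by
        rw [← Finset.mul_sum, Finset.sum_sub_distrib, ← Finset.mul_sum, hcross m i]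
      rw [e4]
      ring
    rw [Finset.sum_congr rfl (fun i _ => e3 i), ← Finset.mul_sum]
    congr 1
    rw [Finset.sum_sub_distrib, Finset.sum_sub_distrib, ← Finset.sum_mul, hW m, hAv m,
      hBv m]
    have expand : ∑ i : Fin (m+2), ((∑ j : Fin (m+2), dd i j) * (∑ l : Fin (m+2), dd i l)
        - ∑ j : Fin (m+2), dd i j * dd i j)
        = (7*((m:ℝ)+2)^5 - 15*((m:ℝ)+2)^3 + 8*((m:ℝ)+2))/60
          - ((m:ℝ)+2)^2*(((m:ℝ)+2)^2-1)/6 := by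
      rw [Finset.sum_sub_distrib, hBv m, hCv m]
    rw [expand]
    ring
  have e1 : ∀ σ : Equiv.Perm (Fin (m+2)), (∑ i : Fin (m+2), dd i (σ i))^2
      = ∑ i : Fin (m+2), ∑ k : Fin (m+2), dd i (σ i) * dd k (σ k) := by
    intro σ; rw [sq, Finset.sum_mul_sum]
  have swap2 : ∑ σ : Equiv.Perm (Fin (m+2)), ∑ i : Fin (m+2), ∑ k : Fin (m+2),
        dd i (σ i) * dd k (σ k)
      = ∑ i : Fin (m+2), ∑ k : Fin (m+2), ∑ σ : Equiv.Perm (Fin (m+2)),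
        dd i (σ i) * dd k (σ k) := by
    rw [Finset.sum_comm]
    exact Finset.sum_congr rfl fun i _ => Finset.sum_comm
  calc ∑ σ : Equiv.Perm (Fin (m+2)), (∑ i : Fin (m+2), dd i (σ i))^2
      = ∑ σ : Equiv.Perm (Fin (m+2)), ∑ i : Fin (m+2), ∑ k : Fin (m+2),
          dd i (σ i) * dd k (σ k) := Finset.sum_congr rfl fun σ _ => e1 σ
    _ = ∑ i : Fin (m+2), ∑ k : Fin (m+2), ∑ σ : Equiv.Perm (Fin (m+2)),
          dd i (σ i) * dd k (σ k) := swap2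
    _ = (∑ i : Fin (m+2), ∑ σ : Equiv.Perm (Fin (m+2)), dd i (σ i) * dd i (σ i))
          + ∑ i : Fin (m+2), ∑ k ∈ Finset.univ.erase i,
            (∑ σ : Equiv.Perm (Fin (m+2)), dd i (σ i) * dd k (σ k)) := by
        rw [← Finset.sum_add_distrib]
        exact Finset.sum_congr rfl fun i _ =>
          (Finset.add_sum_erase _ _ (Finset.mem_univ i)).symm
    _ = (Nat.factorial (m+1) : ℝ) * (((m:ℝ)+2)^2*(((m:ℝ)+2)^2-1)/6)
          + (Nat.factorial m : ℝ) *
            ((((m:ℝ)+2)*(((m:ℝ)+2)^2-1)/3) * (((m:ℝ)+2)*(((m:ℝ)+2)^2-1)/3)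
              - 2*((7*((m:ℝ)+2)^5 - 15*((m:ℝ)+2)^3 + 8*((m:ℝ)+2))/60)
              + ((m:ℝ)+2)^2*(((m:ℝ)+2)^2-1)/6) := by
        rw [part2]
        congr 1
        rw [Finset.sum_congr rfl (fun i _ => key1p m (dd i) (dd i) i), ← Finset.mul_sum,
          hCv m]

theorem footrule_variance_uniform_permutation (n : ℕ) (hn : 2 ≤ n) :
    (∑ σ : Equiv.Perm (Fin n),
        (1 - (3 / ((n:ℝ)^2 - 1)) * ∑ i : Fin n,
          |(((i : ℕ) + 1 : ℝ)) - (((σ i : ℕ) + 1 : ℝ))|)^2) / (Nat.factorial n : ℝ)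
      - ((∑ σ : Equiv.Perm (Fin n),
          (1 - (3 / ((n:ℝ)^2 - 1)) * ∑ i : Fin n,
            |(((i : ℕ) + 1 : ℝ)) - (((σ i : ℕ) + 1 : ℝ))|)) / (Nat.factorial n : ℝ))^2
      = (2 * (n:ℝ)^2 + 7) / (5 * ((n:ℝ) + 1) * ((n:ℝ) - 1)^2) := by
  obtain ⟨m, rfl⟩ : ∃ m, n = m + 2 := ⟨n - 2, by omega⟩
  have habs : ∀ (σ : Equiv.Perm (Fin (m+2))) (i : Fin (m+2)),
      |(((i : ℕ) + 1 : ℝ)) - (((σ i : ℕ) + 1 : ℝ))| = dd i (σ i) := by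
    intro σ i; rw [dd]; congr 1; ring
  simp only [habs]
  push_cast
  set t : ℝ := 3 / (((m:ℝ) + 2)^2 - 1) with ht
  have hcard : ∑ σ : Equiv.Perm (Fin (m+2)), (1:ℝ) = ((m+2).factorial : ℝ) := by
    rw [Finset.sum_const, Finset.card_univ, Fintype.card_perm, Fintype.card_fin,
      nsmul_eq_mul, mul_one]
  have sum1 : ∑ σ : Equiv.Perm (Fin (m+2)), (1 - t * ∑ i : Fin (m+2), dd i (σ i))
      = ((m+2).factorial : ℝ)
        - t * ∑ σ : Equiv.Perm (Fin (m+2)), ∑ i : Fin (m+2), dd i (σ i) := by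
    rw [Finset.sum_sub_distrib, ← Finset.mul_sum, hcard]
  have sum2 : ∑ σ : Equiv.Perm (Fin (m+2)), (1 - t * ∑ i : Fin (m+2), dd i (σ i))^2
      = ((m+2).factorial : ℝ)
        - 2*t * (∑ σ : Equiv.Perm (Fin (m+2)), ∑ i : Fin (m+2), dd i (σ i))
        + t^2 * ∑ σ : Equiv.Perm (Fin (m+2)), (∑ i : Fin (m+2), dd i (σ i))^2 := by
    have e : ∀ σ : Equiv.Perm (Fin (m+2)), (1 - t * ∑ i : Fin (m+2), dd i (σ i))^2
        = 1 - (2*t) * (∑ i : Fin (m+2), dd i (σ i))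
          + t^2 * (∑ i : Fin (m+2), dd i (σ i))^2 := fun σ => by ring
    rw [Finset.sum_congr rfl fun σ _ => e σ, Finset.sum_add_distrib, Finset.sum_sub_distrib,
      ← Finset.mul_sum, ← Finset.mul_sum, hcard]
  rw [sum1, sum2, hT m, hU m]
  have hstep : m + 2 = (m + 1) + 1 := rfl
  have hfact1 : ((m+1).factorial : ℝ) = ((m:ℝ)+1) * (m.factorial : ℝ) := by
    rw [Nat.factorial_succ]; push_cast; ring
  have hfact2 : ((m+2).factorial : ℝ) = ((m:ℝ)+2) * (((m:ℝ)+1) * (m.factorial : ℝ)) := by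
    rw [hstep, Nat.factorial_succ]; push_cast [Nat.factorial_succ]; ring
  rw [hfact1, hfact2, ht]
  have hq : (m.factorial : ℝ) ≠ 0 := by
    have := m.factorial_pos; positivity
  have hm : (0:ℝ) ≤ (m:ℝ) := Nat.cast_nonneg m
  have h1 : ((m:ℝ)+1) ≠ 0 := by positivity
  have h2 : ((m:ℝ)+2) ≠ 0 := by positivity
  have h4 : ((m:ℝ)+2)^2 - 1 ≠ 0 := ne_of_gt (by nlinarith)
  have h5 : (m:ℝ)+2+1 ≠ 0 := by positivity
  have h6 : ((m:ℝ)+2-1) ≠ 0 := ne_of_gt (by nlinarith)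
  field_simp
  ring
end
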